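/- arXiv:2407.09113 — 3 statements merged into one kernel-verified Lean document; each statement's English description precedes it below -/
import Mathlib

section
/- There exists a constant C > 0 such that for all real x ≥ 2, Σ_{t ≤ x} 1/φ(t) ≤ C * log x, where the sum is over positive integers t ≤ x and φ denotes Euler's totient function. -/
/-!
Since `∑_{d ∣ n} φ(d) = n` and `φ(d) φ(e) ≤ φ(de)`, one has
`n / φ(n) ≤ ∑_{d ∣ n} 1 / φ(d)`.
Dividing by `n^(k+1)` bounds `1 / (n^k φ(n))` by the Dirichlet convolution of
`1 / (n^(k+1) φ(n))` with `1 / n^(k+1)`, so the partial sums `S_k(N) = ∑_{n ≤ N} 1 / (n^k φ(n))`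
satisfy `S_k ≤ S_{k+1} · ∑_{n ≤ N} 1 / n^(k+1)`. Using this for `k = 1` together with
`S_2 ≤ ∑ 1 / n² ≤ 2` gives `S_1 ≤ 4`, and then for `k = 0` it gives `S_0 ≤ 4 (1 + log N)`.
-/

open Finset

theorem Nat.sum_Ioc_sum_divisorsAntidiagonal_le {R : Type*} [CommSemiring R] [PartialOrder R]
    [IsOrderedRing R] (f g : ℕ → R) (hf : ∀ n, 0 ≤ f n) (hg : ∀ n, 0 ≤ g n) (N : ℕ) :
    ∑ n ∈ Ioc 0 N, ∑ x ∈ n.divisorsAntidiagonal, f x.1 * g x.2 ≤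
      (∑ n ∈ Ioc 0 N, f n) * ∑ n ∈ Ioc 0 N, g n := by
  calc ∑ n ∈ Ioc 0 N, ∑ x ∈ n.divisorsAntidiagonal, f x.1 * g x.2
      = ∑ n ∈ Ioc 0 N, ∑ x ∈ Ioc 0 N ×ˢ Ioc 0 N with x.1 * x.2 = n, f x.1 * g x.2 := by
        refine sum_congr rfl fun n hn ↦ ?_
        rw [mem_Ioc] at hn
        rw [Nat.divisorsAntidiagonal_eq_prod_filter_of_le hn.1.ne' hn.2]
    _ = ∑ x ∈ Ioc 0 N ×ˢ Ioc 0 N with x.1 * x.2 ∈ Ioc 0 N, f x.1 * g x.2 :=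
        sum_fiberwise_eq_sum_filter _ _ _ _
    _ ≤ ∑ x ∈ Ioc 0 N ×ˢ Ioc 0 N, f x.1 * g x.2 :=
        sum_le_sum_of_subset_of_nonneg (filter_subset _ _)
          fun x _ _ ↦ mul_nonneg (hf x.1) (hg x.2)
    _ = (∑ n ∈ Ioc 0 N, f n) * ∑ n ∈ Ioc 0 N, g n := by
        rw [sum_product, sum_mul_sum]

theorem Nat.sum_divisorsAntidiagonal_totient (n : ℕ) :
    ∑ x ∈ n.divisorsAntidiagonal, x.2.totient = n := by
  rw [Nat.sum_divisorsAntidiagonal' fun _ e ↦ e.totient, Nat.sum_totient]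

theorem inv_pow_mul_totient_le_sum_divisorsAntidiagonal (k n : ℕ) :
    ((n : ℝ) ^ k * n.totient)⁻¹ ≤
      ∑ x ∈ n.divisorsAntidiagonal,
        ((x.1 : ℝ) ^ (k + 1) * x.1.totient)⁻¹ * ((x.2 : ℝ) ^ (k + 1))⁻¹ := by
  rcases n.eq_zero_or_pos with rfl | hn
  · simp
  have hφn : (0 : ℝ) < n.totient := by exact_mod_cast Nat.totient_pos.mpr hn
  calc ((n : ℝ) ^ k * n.totient)⁻¹
      = ∑ x ∈ n.divisorsAntidiagonal,
          ((n : ℝ) ^ (k + 1))⁻¹ * (x.2.totient / n.totient) := by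
        rw [← mul_sum, ← sum_div]
        rw_mod_cast [Nat.sum_divisorsAntidiagonal_totient]
        field_simp
        push_cast
        ring
    _ ≤ _ := by
        refine sum_le_sum fun ⟨d, e⟩ hde ↦ ?_
        obtain ⟨rfl, hn0⟩ := Nat.mem_divisorsAntidiagonal.mp hde
        have hφd : (0 : ℝ) < d.totient := by
          exact_mod_cast Nat.totient_pos.mpr (Nat.pos_of_ne_zero (left_ne_zero_of_mul hn0))
        have hφ : (d.totient : ℝ) * e.totient ≤ (d * e).totient := by
          exact_mod_cast Nat.totient_super_multiplicative d e
        rw [mul_inv, mul_right_comm, ← mul_inv, ← mul_pow, ← Nat.cast_mul]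
        gcongr
        rw [div_le_iff₀ hφn, inv_mul_eq_div, le_div_iff₀ hφd]
        linarith

theorem sum_Ioc_inv_pow_mul_totient_le (k N : ℕ) :
    ∑ n ∈ Ioc 0 N, ((n : ℝ) ^ k * n.totient)⁻¹ ≤
      (∑ n ∈ Ioc 0 N, ((n : ℝ) ^ (k + 1) * n.totient)⁻¹) *
        ∑ n ∈ Ioc 0 N, ((n : ℝ) ^ (k + 1))⁻¹ :=
  (sum_le_sum fun n _ ↦ inv_pow_mul_totient_le_sum_divisorsAntidiagonal k n).trans
    (Nat.sum_Ioc_sum_divisorsAntidiagonal_le (fun n ↦ ((n : ℝ) ^ (k + 1) * n.totient)⁻¹)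
      (fun n ↦ ((n : ℝ) ^ (k + 1))⁻¹) (fun _ ↦ by positivity) (fun _ ↦ by positivity) N)

theorem Nat.Icc_one_eq_Ioc_zero (N : ℕ) : Icc 1 N = Ioc 0 N := Icc_add_one_left_eq_Ioc 0 N

theorem sum_Ioc_inv_sq_le_two (N : ℕ) : ∑ n ∈ Ioc 0 N, ((n : ℝ) ^ 2)⁻¹ ≤ 2 := by
  simpa [Ioo_add_one_right_eq_Ioc] using sum_Ioo_inv_sq_le (α := ℝ) 0 (N + 1)

theorem sum_Ioc_inv_le_one_add_log (N : ℕ) :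
    ∑ n ∈ Ioc 0 N, (n : ℝ)⁻¹ ≤ 1 + Real.log N := by
  have := harmonic_le_one_add_log N
  rw [harmonic_eq_sum_Icc, Nat.Icc_one_eq_Ioc_zero] at this
  push_cast at this
  exact this

theorem sum_Ioc_inv_totient_le (N : ℕ) :
    ∑ n ∈ Ioc 0 N, (n.totient : ℝ)⁻¹ ≤ 4 * (1 + Real.log N) := by
  have h₀ := sum_Ioc_inv_pow_mul_totient_le 0 N
  have h₁ := sum_Ioc_inv_pow_mul_totient_le 1 N
  simp only [pow_zero, one_mul, zero_add, pow_one, Nat.reduceAdd] at h₀ h₁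
  have h₂ : ∑ n ∈ Ioc 0 N, ((n : ℝ) ^ 2 * n.totient)⁻¹ ≤
      ∑ n ∈ Ioc 0 N, ((n : ℝ) ^ 2)⁻¹ := by
    refine sum_le_sum fun n hn ↦ ?_
    have hn₀ : (0 : ℝ) < n := by exact_mod_cast (mem_Ioc.mp hn).1
    have hφ : (1 : ℝ) ≤ n.totient := by exact_mod_cast Nat.totient_pos.mpr (mem_Ioc.mp hn).1
    gcongr
    exact le_mul_of_one_le_right (by positivity) hφ
  have hsq := sum_Ioc_inv_sq_le_two N
  have hS₁ : ∑ n ∈ Ioc 0 N, ((n : ℝ) * n.totient)⁻¹ ≤ 4 :=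
    calc _ ≤ _ := h₁
      _ ≤ 2 * 2 :=
        mul_le_mul (h₂.trans hsq) hsq (sum_nonneg fun _ _ ↦ by positivity) zero_le_two
      _ = 4 := by norm_num
  exact h₀.trans (mul_le_mul hS₁ (sum_Ioc_inv_le_one_add_log N)
    (sum_nonneg fun _ _ ↦ by positivity) zero_le_four)

/-- The sum of reciprocals of Euler's totient function up to `x` is `O(log x)`. -/
theorem sum_inv_totient_le :
    ∃ C : ℝ, 0 < C ∧ ∀ x : ℝ, 2 ≤ x →
      ∑ t ∈ Finset.Icc 1 ⌊x⌋₊, (1 : ℝ) / (Nat.totient t) ≤ C * Real.log x := by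
  refine ⟨12, by norm_num, fun x hx ↦ ?_⟩
  have hN : 2 ≤ ⌊x⌋₊ := Nat.le_floor (by exact_mod_cast hx)
  have hlog : Real.log ⌊x⌋₊ ≤ Real.log x :=
    Real.log_le_log (by exact_mod_cast hN.trans_lt' two_pos) (Nat.floor_le (by linarith))
  have hlog_two : 1 / 2 < Real.log x :=
    (by linarith [Real.log_two_gt_d9] : (1 : ℝ) / 2 < Real.log 2).trans_le
      (Real.log_le_log two_pos hx)
  rw [Nat.Icc_one_eq_Ioc_zero]
  simp only [one_div]
  linarith [sum_Ioc_inv_totient_le ⌊x⌋₊]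
end

section
/- Let q be a prime, let m ≥ 2 be an integer, and let p be a prime with q + 1 ≤ p^m ≤ q·(log q)^2, where q ≥ 16 (so that log log q > 0). Then |1/m - (log p)/(log q)| ≤ (2 log log q)/(m log q). -/
/-- Weight bound: for a prime power `p^m` with `q+1 ≤ p^m ≤ q (log q)²`,
`|1/m - log p / log q| ≤ 2 log log q / (m log q)`. -/
theorem weight_bound (q p m : ℕ) (hq : q.Prime) (hq16 : 16 ≤ q) (hp : p.Prime)
    (hm : 2 ≤ m) (h1 : (q : ℝ) + 1 ≤ (p : ℝ) ^ m)
    (h2 : (p : ℝ) ^ m ≤ (q : ℝ) * Real.log q ^ 2) :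
    |1 / (m : ℝ) - Real.log p / Real.log q| ≤
      2 * Real.log (Real.log q) / (m * Real.log q) := by
  have hm0 : (0:ℝ) < (m:ℝ) := by exact_mod_cast (by omega : 0 < m)
  have hq1 : (1:ℝ) < (q:ℝ) := by exact_mod_cast (by omega : 1 < q)
  have hq0 : (0:ℝ) < (q:ℝ) := by linarith
  have hlq : 0 < Real.log q := Real.log_pos hq1
  have hlq1 : 1 ≤ Real.log q := by
    rw [Real.le_log_iff_exp_le hq0]
    have h3 : Real.exp 1 ≤ 3 := by
      have := Real.exp_one_lt_d9; linarith
    have : (3:ℝ) ≤ (q:ℝ) := by exact_mod_cast (by omega : 3 ≤ q)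
    linarith
  have hll : 0 ≤ Real.log (Real.log q) := Real.log_nonneg hlq1
  have hp0 : (0:ℝ) < (p:ℝ) := by exact_mod_cast hp.pos
  have hpm0 : (0:ℝ) < (p:ℝ) ^ m := by positivity
  have hlower : Real.log q ≤ (m:ℝ) * Real.log p := by
    rw [← Real.log_pow]
    exact Real.log_le_log hq0 (by linarith)
  have hupper : (m:ℝ) * Real.log p ≤ Real.log q + 2 * Real.log (Real.log q) := by
    have h := Real.log_le_log hpm0 h2
    rw [Real.log_pow, Real.log_mul (ne_of_gt hq0) (by positivity), Real.log_pow] at h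
    push_cast at h
    linarith
  have key : |Real.log q - (m:ℝ) * Real.log p| ≤ 2 * Real.log (Real.log q) :=
    abs_le.2 ⟨by linarith, by linarith⟩
  have heq : 1 / (m:ℝ) - Real.log p / Real.log q
      = (Real.log q - (m:ℝ) * Real.log p) / ((m:ℝ) * Real.log q) := by
    field_simp
  rw [heq, abs_div, abs_of_pos (by positivity : (0:ℝ) < (m:ℝ) * Real.log q)]
  gcongr
end

section
/- Let δ ∈ (0, 1/2) and let q be a prime with q ≥ 3. For x = q^{1+δ} and any b ∈ {-1,1}, if one assumes the Brun–Titchmarsh bound π(u; q, b) ≤ 2u/(φ(q)·log(u/q)) for all u > q, then Σ_{p prime, 2q-1 ≤ p ≤ x, p ≡ b (mod q)} (log p)/p ≤ (2/(q-1))·(log x/log(x/q) + (log q)·log(log(x/q)/log 2) + log(x/q) + C) for some absolute constant C. -/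
/-!
Partial summation with the weight `f t = log t / t` against the counting function `A t` of the
primes `p ≡ b (mod q)`, started at `a = 2q - 2`, gives `∑ f p ≤ f x * A x - ∫ₐˣ f' t * A t dt`.
Beyond `e` the weight decreases, so the Brun–Titchmarsh bound `A t ≤ K t / log (t / q)`,
`K = 2 / (q - 1)`, can be inserted in both terms. The boundary term becomes
`K log x / log (x / q)`, and the integrand is at most `K (1 / t + log q / (t log (t / q)))`,
whose primitive `K (log t + log q * log (log (t / q)))` produces `log (x / q)` and
`log q * log (log (x / q) / log 2)`. Starting at `2q - 2` rather than `2q` costs only the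
bounded amount `log q * (log (log 2) - log (log (2 - 2 / q))) ≤ 4`.
-/

open Real MeasureTheory

theorem sum_mul_le_sub_integral_of_sum_le {c : ℕ → ℝ} {f f' B : ℝ → ℝ} {a b : ℝ}
    (ha : 0 ≤ a) (hab : a < b) (hc : ∀ k, 0 ≤ c k)
    (hf : ∀ t ∈ Set.Icc a b, HasDerivAt f (f' t) t) (hf'_int : IntegrableOn f' (Set.Icc a b))
    (hf'_nonpos : ∀ t ∈ Set.Ioc a b, f' t ≤ 0) (hfa : 0 ≤ f a) (hfb : 0 ≤ f b)
    (hB : ∀ t ∈ Set.Ioc a b, ∑ k ∈ Finset.Icc 0 ⌊t⌋₊, c k ≤ B t)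
    (hB_int : IntegrableOn (fun t ↦ f' t * B t) (Set.Ioc a b)) :
    ∑ k ∈ Finset.Ioc ⌊a⌋₊ ⌊b⌋₊, f k * c k ≤ f b * B b - ∫ t in Set.Ioc a b, f' t * B t := by
  have hderiv : Set.EqOn (deriv f) f' (Set.Icc a b) := fun t ht ↦ (hf t ht).deriv
  rw [sum_mul_eq_sub_sub_integral_mul c ha hab.le (fun t ht ↦ (hf t ht).differentiableAt)
    (hf'_int.congr_fun hderiv.symm measurableSet_Icc), setIntegral_congr_fun measurableSet_Ioc
    fun t ht ↦ by rw [hderiv (Set.Ioc_subset_Icc_self ht)]]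
  have h_end : f b * ∑ k ∈ Finset.Icc 0 ⌊b⌋₊, c k ≤ f b * B b :=
    mul_le_mul_of_nonneg_left (hB b ⟨hab, le_rfl⟩) hfb
  have h_start : 0 ≤ f a * ∑ k ∈ Finset.Icc 0 ⌊a⌋₊, c k :=
    mul_nonneg hfa (Finset.sum_nonneg fun k _ ↦ hc k)
  have h_integral : ∫ t in Set.Ioc a b, f' t * B t ≤
      ∫ t in Set.Ioc a b, f' t * ∑ k ∈ Finset.Icc 0 ⌊t⌋₊, c k :=
    setIntegral_mono_on hB_int
      ((integrableOn_mul_sum_Icc c ha hf'_int).mono_set Set.Ioc_subset_Icc_self)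
      measurableSet_Ioc fun t ht ↦ mul_le_mul_of_nonpos_left (hB t ht) (hf'_nonpos t ht)
  linarith

theorem hasDerivAt_log_div_self {t : ℝ} (ht : t ≠ 0) :
    HasDerivAt (fun t ↦ log t / t) ((1 - log t) / t ^ 2) t :=
  ((hasDerivAt_log ht).fun_div (hasDerivAt_id' t) ht).congr_deriv (by field_simp)

theorem hasDerivAt_log_log_div {q t : ℝ} (hq : q ≠ 0) (ht : t ≠ 0) (htq : log (t / q) ≠ 0) :
    HasDerivAt (fun t ↦ log (log (t / q))) (1 / (t * log (t / q))) t :=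
  ((((hasDerivAt_id' t).div_const q).log (by simp [ht, hq])).log htq).congr_deriv
    (by field_simp)

theorem log_mul_sub_log_log_le_four {q : ℝ} (hq : 3 ≤ q) :
    log q * (log (log 2) - log (log ((2 * q - 2) / q))) ≤ 4 := by
  have hq0 : 0 < q := by linarith
  set s := log ((2 * q - 2) / q)
  have hs : 1 / 4 ≤ s := by
    have h := one_sub_inv_le_log_of_pos (x := (2 * q - 2) / q) (div_pos (by linarith) hq0)
    have : q / (2 * q - 2) ≤ 3 / 4 := by rw [div_le_iff₀ (by linarith)]; linarith
    rw [inv_div] at h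
    linarith
  have hgap : (log 2 - s) * (q - 1) ≤ 1 := by
    have h := log_le_sub_one_of_pos (x := q / (q - 1)) (div_pos hq0 (by linarith))
    have e : log 2 - s = log (q / (q - 1)) := by
      rw [← log_div (by norm_num) (div_pos (by linarith) hq0).ne']
      congr 1; field_simp
    rw [e, ← le_div_iff₀ (by linarith)]
    rwa [div_sub_one (by linarith), sub_sub_cancel] at h
  have hloglog : log (log 2) - log s ≤ 4 / (q - 1) := by
    have h := log_le_sub_one_of_pos (x := log 2 / s) (by positivity)
    rw [log_div (by positivity) (by positivity), div_sub_one (by positivity)] at h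
    refine h.trans ?_
    rw [div_le_div_iff₀ (by positivity) (by linarith)]
    linarith
  calc log q * (log (log 2) - log s) ≤ log q * (4 / (q - 1)) :=
        mul_le_mul_of_nonneg_left hloglog (log_nonneg (by linarith))
    _ ≤ (q - 1) * (4 / (q - 1)) :=
        mul_le_mul_of_nonneg_right (log_le_sub_one_of_pos hq0)
          (div_nonneg (by norm_num) (by linarith))
    _ = 4 := by field_simp [(by linarith : q - 1 ≠ 0)]

/-- Primitive of `1 / t + log q / (t * log (t / q))`, the majorant of the partial-summation
integrand. -/
noncomputable def btPrimitive (q t : ℝ) : ℝ := log t + log q * log (log (t / q))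

theorem hasDerivAt_btPrimitive {q t : ℝ} (hq : q ≠ 0) (ht : t ≠ 0) (htq : log (t / q) ≠ 0) :
    HasDerivAt (btPrimitive q) (1 / t + log q * (1 / (t * log (t / q)))) t :=
  ((hasDerivAt_log ht).congr_deriv (one_div t).symm).add
    ((hasDerivAt_log_log_div hq ht htq).const_mul _)

theorem btPrimitive_sub_le {q x : ℝ} (hq : 3 ≤ q) (hqx : q < x) :
    btPrimitive q x - btPrimitive q (2 * q - 2) ≤
      log (x / q) + log q * log (log (x / q) / log 2) + 4 := by
  have hL : 0 < log (x / q) := log_pos ((one_lt_div (by linarith)).2 hqx)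
  have := log_div (by linarith : x ≠ 0) (by linarith : q ≠ 0)
  have := log_le_log (by linarith : 0 < q) (by linarith : q ≤ 2 * q - 2)
  have := log_mul_sub_log_log_le_four hq
  rw [btPrimitive, btPrimitive, log_div hL.ne' (log_pos one_lt_two).ne']
  linarith

section BrunTitchmarshWeight

variable {q a b K : ℝ}

theorem continuousOn_deriv_log_div_self_mul_bound (hq : 0 < q) :
    ContinuousOn (fun t ↦ (1 - log t) / t ^ 2 * (K * t / log (t / q))) (Set.Ioi q) := by
  have hpos : ∀ t ∈ Set.Ioi q, 0 < t ∧ 0 < log (t / q) := fun t ht ↦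
    ⟨hq.trans ht, log_pos ((one_lt_div hq).2 ht)⟩
  fun_prop (disch := first
    | exact hq.ne'
    | intro t ht; obtain ⟨ht, hℓ⟩ := hpos t ht; first | exact hℓ.ne' | positivity)

theorem neg_integral_deriv_log_div_self_mul_bound_le (hq : 0 < q) (hqa : q < a) (hab : a ≤ b)
    (hK : 0 ≤ K) :
    -∫ t in Set.Ioc a b, (1 - log t) / t ^ 2 * (K * t / log (t / q)) ≤
      K * (btPrimitive q b - btPrimitive q a) := by
  have hIcc : Set.Icc a b ⊆ Set.Ioi q := fun t ht ↦ hqa.trans_le ht.1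
  have hpos : ∀ t ∈ Set.Icc a b, 0 < t ∧ 0 < log (t / q) := fun t ht ↦
    ⟨hq.trans (hIcc ht), log_pos ((one_lt_div hq).2 (hIcc ht))⟩
  have hG := fun t ht ↦
    (hasDerivAt_btPrimitive hq.ne' (hpos t ht).1.ne' (hpos t ht).2.ne').const_mul K
  rw [← integral_neg, ← intervalIntegral.integral_of_le hab]
  refine (intervalIntegral.integral_le_sub_of_hasDeriv_right_of_le hab
    (fun t ht ↦ (hG t ht).continuousAt.continuousWithinAt)
    (fun t ht ↦ (hG t (Set.Ioo_subset_Icc_self ht)).hasDerivWithinAt)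
    ((continuousOn_deriv_log_div_self_mul_bound hq).mono hIcc).neg.integrableOn_Icc
    fun t ht ↦ ?_).trans_eq (by ring)
  obtain ⟨ht, hℓ⟩ := hpos t (Set.Ioo_subset_Icc_self ht)
  have hlog : log t = log (t / q) + log q := by rw [log_div ht.ne' hq.ne']; ring
  have hsplit : -((1 - log t) / t ^ 2 * (K * t / log (t / q))) =
      K * (1 / t + log q * (1 / (t * log (t / q)))) - K / (t * log (t / q)) := by
    rw [hlog]; field_simp; ring
  have : 0 ≤ K / (t * log (t / q)) := by positivity
  rw [Pi.neg_apply]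
  linarith

theorem sum_log_div_self_mul_le {c : ℕ → ℝ} (hq : 0 < q) (hqa : q < a) (hea : exp 1 ≤ a)
    (hab : a < b) (hK : 0 ≤ K) (hc : ∀ k, 0 ≤ c k)
    (hB : ∀ t ∈ Set.Ioc a b, ∑ k ∈ Finset.Icc 0 ⌊t⌋₊, c k ≤ K * t / log (t / q)) :
    ∑ k ∈ Finset.Ioc ⌊a⌋₊ ⌊b⌋₊, log k / k * c k ≤
      K * (log b / log (b / q) + (btPrimitive q b - btPrimitive q a)) := by
  have ha : 0 < a := hq.trans hqa
  have hloga : 1 ≤ log a := (le_log_iff_exp_le ha).2 hea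
  have hf'_cont : ContinuousOn (fun t ↦ (1 - log t) / t ^ 2) (Set.Ici a) := by
    fun_prop (disch := exact fun t (ht : a ≤ t) ↦ by have := ha.trans_le ht; positivity)
  have habel := sum_mul_le_sub_integral_of_sum_le ha.le hab hc
    (fun t ht ↦ hasDerivAt_log_div_self (by linarith [ht.1]))
    (hf'_cont.mono Set.Icc_subset_Ici_self).integrableOn_Icc
    (fun t ht ↦ div_nonpos_of_nonpos_of_nonneg
      (by linarith [log_le_log ha ht.1.le]) (sq_nonneg t))
    (div_nonneg (by linarith) ha.le)
    (div_nonneg (by linarith [log_le_log ha hab.le]) (by linarith)) hB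
    (((continuousOn_deriv_log_div_self_mul_bound hq).mono fun t ht ↦
      hqa.trans_le ht.1).integrableOn_Icc.mono_set Set.Ioc_subset_Icc_self)
  have hend : log b / b * (K * b / log (b / q)) = K * (log b / log (b / q)) := by
    field_simp [(by linarith : b ≠ 0)]
  have := neg_integral_deriv_log_div_self_mul_bound_le hq hqa hab.le hK
  linarith

end BrunTitchmarshWeight

theorem log_div_log_div_add_mul_log_log_nonneg {q x : ℝ} (hq : 1 < q) (hqx : q < x) :
    0 ≤ log x / log (x / q) + log q * log (log (x / q) / log 2) := by
  have hL : 0 < log (x / q) := log_pos ((one_lt_div (by linarith)).2 hqx)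
  have hlogx : log q / log (x / q) ≤ log x / log (x / q) :=
    div_le_div_of_nonneg_right (log_le_log (by linarith) hqx.le) hL.le
  have hloglog : 1 - (log (x / q))⁻¹ ≤ log (log (x / q) / log 2) :=
    (one_sub_inv_le_log_of_pos hL).trans (log_le_log hL (le_div_self hL.le (log_pos one_lt_two)
      (by linarith [log_two_lt_d9])))
  have hlogq : 0 ≤ log q := log_nonneg hq.le
  have := mul_le_mul_of_nonneg_left hloglog hlogq
  rw [div_eq_mul_inv] at hlogx
  linarith

theorem sum_Icc_zero_boole_eq_card_filter_Icc_one {P : ℕ → Prop} [DecidablePred P] (h0 : ¬P 0)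
    (n : ℕ) : ∑ k ∈ Finset.Icc 0 n, (if P k then (1 : ℝ) else 0) =
      ((Finset.Icc 1 n).filter P).card := by
  rw [Finset.sum_boole]
  congr 2
  ext k
  rcases k with _ | k <;> simp [h0]

/-- Brun–Titchmarsh implies a bound for `∑ (log p)/p` over `p ≡ b (mod q)`,
`2q - 1 ≤ p ≤ q^{1+δ}`, with an absolute constant `C`. -/
theorem BT_logsum_bound :
    ∃ C : ℝ, 0 < C ∧
      ∀ (δ : ℝ), 0 < δ → δ < 1 / 2 →
      ∀ q : ℕ, q.Prime → 3 ≤ q →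
      ∀ b : ℤ, (b = -1 ∨ b = 1) →
      (∀ u : ℝ, (q : ℝ) < u →
        ((((Finset.Icc 1 ⌊u⌋₊).filter
            (fun p : ℕ => p.Prime ∧ (p : ℤ) ≡ b [ZMOD (q : ℤ)])).card : ℝ) ≤
          2 * u / ((Nat.totient q : ℝ) * Real.log (u / q)))) →
      ∑ p ∈ (Finset.Icc (2 * q - 1) ⌊(q : ℝ) ^ ((1 : ℝ) + δ)⌋₊).filter
          (fun p : ℕ => p.Prime ∧ (p : ℤ) ≡ b [ZMOD (q : ℤ)]),
        Real.log p / p ≤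
      (2 / ((q : ℝ) - 1)) *
        (Real.log ((q : ℝ) ^ ((1 : ℝ) + δ)) / Real.log ((q : ℝ) ^ ((1 : ℝ) + δ) / q) +
         Real.log q * Real.log (Real.log ((q : ℝ) ^ ((1 : ℝ) + δ) / q) / Real.log 2) +
         Real.log ((q : ℝ) ^ ((1 : ℝ) + δ) / q) + C) := by
  refine ⟨4, by norm_num, fun δ hδ _ q hq hq3 b _ H ↦ ?_⟩
  set x : ℝ := (q : ℝ) ^ ((1 : ℝ) + δ)
  have hq3' : (3 : ℝ) ≤ q := by exact_mod_cast hq3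
  have hqx : (q : ℝ) < x := by
    simpa using rpow_lt_rpow_of_exponent_lt (by linarith) (by linarith : (1 : ℝ) < 1 + δ)
  have hK : 0 ≤ 2 / ((q : ℝ) - 1) := div_nonneg zero_le_two (by linarith)
  have ha : ((2 * q - 2 : ℕ) : ℝ) = 2 * q - 2 := by
    rw [Nat.cast_sub (by omega)]; push_cast; ring
  rcases le_or_gt x (2 * q - 2 : ℕ) with hxa | hax
  · have hN : ⌊x⌋₊ < 2 * q - 1 := (Nat.floor_le_of_le hxa).trans_lt (by omega)
    rw [Finset.Icc_eq_empty_of_lt hN, Finset.filter_empty, Finset.sum_empty]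
    have hL : 0 < log (x / q) := log_pos ((one_lt_div (by linarith)).2 hqx)
    have := log_div_log_div_add_mul_log_log_nonneg (by linarith) hqx
    exact mul_nonneg hK (by linarith)
  have hB : ∀ t ∈ Set.Ioc ((2 * q - 2 : ℕ) : ℝ) x, ∑ k ∈ Finset.Icc 0 ⌊t⌋₊,
      (if k.Prime ∧ (k : ℤ) ≡ b [ZMOD (q : ℤ)] then (1 : ℝ) else 0) ≤
        2 / ((q : ℝ) - 1) * t / log (t / q) := fun t ht ↦ by
    rw [sum_Icc_zero_boole_eq_card_filter_Icc_one (by simp [Nat.not_prime_zero])]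
    refine (H t (by linarith [ht.1])).trans_eq ?_
    rw [Nat.totient_prime hq, Nat.cast_sub hq.one_le, Nat.cast_one, div_mul_eq_mul_div, div_div]
  have hsum := sum_log_div_self_mul_le (by positivity) (by linarith)
    (by rw [ha]; linarith [exp_one_lt_d9]) hax hK (fun k ↦ by positivity) hB
  rw [Nat.floor_natCast, ← Finset.Icc_add_one_left_eq_Ioc,
    show 2 * q - 2 + 1 = 2 * q - 1 by omega, ha] at hsum
  simp only [mul_ite, mul_one, mul_zero, ← Finset.sum_filter] at hsum
  refine hsum.trans (mul_le_mul_of_nonneg_left ?_ hK)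
  linarith [btPrimitive_sub_le hq3' hqx]
end
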